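/- For the energy-based SBP-SAT semi-discretization of the 1D wave equation with homogeneous Dirichlet condition at x=0 and Neumann condition at x=1, the discrete energy E_H = uᵀAu + vᵀHv satisfies dE_H/dt = 2α(dₙᵀu)² + 2β(e₁ᵀv)², which is ≤ 0 when α ≤ 0 and β ≤ 0. -/

import Mathlib

open Matrix

/-! Differentiating, `E_H' = 2 uᵀA u' + 2 vᵀH v'`. The first equation turns `uᵀA u'` into
`uᵀA v + b₁ (e₁ᵀv)(d₁ᵀu) + α (dₙᵀu)²`. Multiplying the second by `H`, the Neumann penalty
`bₙ (dₙᵀu) eₙ` cancels against the boundary term of `H D`, leaving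
`H v' = -A u + (β e₁ᵀv - b₁ d₁ᵀu) e₁`; hence `vᵀH v' = -vᵀA u - b₁ (e₁ᵀv)(d₁ᵀu) + β (e₁ᵀv)²`.
By symmetry of `A` everything except the two dissipation terms cancels. -/

section Calculus

variable {l m : Type*} [Fintype m] {f g : ℝ → m → ℝ} {f' g' : m → ℝ} {t : ℝ}

theorem HasDerivAt.dotProduct (hf : HasDerivAt f f' t) (hg : HasDerivAt g g' t) :
    HasDerivAt (fun s => f s ⬝ᵥ g s) (f' ⬝ᵥ g t + f t ⬝ᵥ g') t :=
  (HasDerivAt.fun_sum (u := Finset.univ) fun i _ =>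
    (hasDerivAt_pi.mp hf i).fun_mul (hasDerivAt_pi.mp hg i)).congr_deriv Finset.sum_add_distrib

theorem HasDerivAt.mulVec [Fintype l] (M : Matrix l m ℝ) (hg : HasDerivAt g g' t) :
    HasDerivAt (fun s => M *ᵥ g s) (M *ᵥ g') t :=
  (mulVecLin M).toContinuousLinearMap.hasFDerivAt.comp_hasDerivAt t hg

theorem HasDerivAt.dotProduct_mulVec_self {M : Matrix m m ℝ} (hM : M.IsSymm)
    (hf : HasDerivAt f f' t) :
    HasDerivAt (fun s => f s ⬝ᵥ M *ᵥ f s) (2 * (f t ⬝ᵥ M *ᵥ f')) t := by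
  convert hf.dotProduct (hf.mulVec M) using 1
  rw [dotProduct_comm, ← vecMul_transpose, hM.eq, ← dotProduct_mulVec]
  ring

end Calculus

section EnergyRate

variable {m : Type*} [Fintype m] [DecidableEq m] {A H : Matrix m m ℝ} {i₀ iₙ : m}
  {d₁ dₙ u v u' v' : m → ℝ} {b₁ bₙ α β : ℝ}

theorem mulVec_velocity_of_sat (hH : H * H⁻¹ = 1)
    (hv' : v' = (H⁻¹ * (-A - b₁ • vecMulVec (Pi.single i₀ 1) d₁
        + bₙ • vecMulVec (Pi.single iₙ 1) dₙ)) *ᵥ u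
      - (bₙ * (dₙ ⬝ᵥ u)) • (H⁻¹ *ᵥ Pi.single iₙ 1) + (β * v i₀) • (H⁻¹ *ᵥ Pi.single i₀ 1)) :
    H *ᵥ v' = -(A *ᵥ u) + (β * v i₀ - b₁ * (d₁ ⬝ᵥ u)) • Pi.single i₀ 1 := by
  have hcancel : ∀ w : m → ℝ, H *ᵥ (H⁻¹ *ᵥ w) = w := fun w => by
    rw [mulVec_mulVec, hH, one_mulVec]
  rw [hv', ← mulVec_mulVec, mulVec_add, mulVec_sub, hcancel, mulVec_smul, mulVec_smul, hcancel, hcancel, add_mulVec,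
    sub_mulVec, smul_mulVec, smul_mulVec, vecMulVec_mulVec, vecMulVec_mulVec, neg_mulVec]
  ext i
  simp only [Pi.add_apply, Pi.sub_apply, Pi.neg_apply, Pi.smul_apply, smul_eq_mul,
    MulOpposite.smul_eq_mul_unop, MulOpposite.unop_op]
  ring

theorem energy_rate_of_sat (hA : A.IsSymm) (hHinv : H * H⁻¹ = 1)
    (hu' : A *ᵥ (u' - v) = (b₁ * v i₀) • d₁ + (α * (dₙ ⬝ᵥ u)) • dₙ)
    (hv' : v' = (H⁻¹ * (-A - b₁ • vecMulVec (Pi.single i₀ 1) d₁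
        + bₙ • vecMulVec (Pi.single iₙ 1) dₙ)) *ᵥ u
      - (bₙ * (dₙ ⬝ᵥ u)) • (H⁻¹ *ᵥ Pi.single iₙ 1) + (β * v i₀) • (H⁻¹ *ᵥ Pi.single i₀ 1)) :
    2 * (u ⬝ᵥ A *ᵥ u') + 2 * (v ⬝ᵥ H *ᵥ v') = 2 * α * (dₙ ⬝ᵥ u) ^ 2 + 2 * β * v i₀ ^ 2 := by
  have hAuv : v ⬝ᵥ A *ᵥ u = u ⬝ᵥ A *ᵥ v := by
    rw [dotProduct_mulVec, ← mulVec_transpose, hA.eq, dotProduct_comm]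
  have hu : u ⬝ᵥ A *ᵥ u' = u ⬝ᵥ A *ᵥ v + b₁ * v i₀ * (d₁ ⬝ᵥ u) + α * (dₙ ⬝ᵥ u) ^ 2 := by
    rw [← sub_add_cancel u' v, mulVec_add, hu', dotProduct_add, dotProduct_add,
      dotProduct_smul, dotProduct_smul, dotProduct_comm u d₁, dotProduct_comm u dₙ]
    simp only [smul_eq_mul]
    ring
  have hv : v ⬝ᵥ H *ᵥ v' = -(u ⬝ᵥ A *ᵥ v) - b₁ * v i₀ * (d₁ ⬝ᵥ u) + β * v i₀ ^ 2 := by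
    rw [mulVec_velocity_of_sat hHinv hv', dotProduct_add, dotProduct_neg, dotProduct_smul,
      dotProduct_single, hAuv, smul_eq_mul]
    ring
  rw [hu, hv]
  ring

end EnergyRate

theorem stmt5_general (n : ℕ) (H A D : Matrix (Fin (n + 1)) (Fin (n + 1)) ℝ)
    (hH : H.PosDef) (hA : A.PosSemidef)
    (d1 dn : Fin (n + 1) → ℝ) (b1 bn α β : ℝ)
    (hα : α ≤ 0) (hβ : β ≤ 0)
    (hD : D = H⁻¹ * (-A - b1 • vecMulVec (Pi.single 0 1) d1
        + bn • vecMulVec (Pi.single (Fin.last n) 1) dn))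
    (u v u' v' : ℝ → Fin (n + 1) → ℝ)
    (hu : ∀ t, HasDerivAt u (u' t) t) (hv : ∀ t, HasDerivAt v (v' t) t)
    (heq1 : ∀ t, A *ᵥ (u' t - v t) =
        (b1 * v t 0) • d1 + (α * (dn ⬝ᵥ u t)) • dn)
    (heq2 : ∀ t, v' t = D *ᵥ u t
        - (bn * (dn ⬝ᵥ u t)) • (H⁻¹ *ᵥ Pi.single (Fin.last n) 1)
        + (β * v t 0) • (H⁻¹ *ᵥ Pi.single 0 1))
    (E : ℝ → ℝ)
    (hE : ∀ t, E t = u t ⬝ᵥ (A *ᵥ u t) + v t ⬝ᵥ (H *ᵥ v t)) :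
    ∀ t, HasDerivAt E (2 * α * (dn ⬝ᵥ u t) ^ 2 + 2 * β * (v t 0) ^ 2) t ∧
      2 * α * (dn ⬝ᵥ u t) ^ 2 + 2 * β * (v t 0) ^ 2 ≤ 0 := by
  have hAsymm : A.IsSymm := isHermitian_iff_isSymm.mp hA.isHermitian
  have hHsymm : H.IsSymm := isHermitian_iff_isSymm.mp hH.isHermitian
  have hHinv : H * H⁻¹ = 1 := mul_nonsing_inv H (isUnit_iff_ne_zero.mpr hH.det_pos.ne')
  obtain rfl : E = _ := funext hE
  intro t
  refine ⟨?_, by nlinarith [sq_nonneg (dn ⬝ᵥ u t), sq_nonneg (v t 0)]⟩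
  rw [← energy_rate_of_sat hAsymm hHinv (heq1 t) (hD ▸ heq2 t)]
  exact ((hu t).dotProduct_mulVec_self hAsymm).add ((hv t).dotProduct_mulVec_self hHsymm)

/-- Energy estimate for the energy-based SBP-SAT semi-discretization of the 1D
wave equation with a homogeneous Dirichlet condition at the left boundary and a
homogeneous Neumann condition at the right boundary: the discrete energy
`E_H = uᵀAu + vᵀHv` satisfies `dE_H/dt = 2α(dₙᵀu)² + 2β(e₁ᵀv)² ≤ 0`
when `α ≤ 0` and `β ≤ 0`. -/
theorem stmt5 (n : ℕ) (H A D : Matrix (Fin (n + 1)) (Fin (n + 1)) ℝ)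
    (hH : H.PosDef) (hHdiag : H.IsDiag) (hA : A.PosSemidef)
    (d1 dn : Fin (n + 1) → ℝ) (b1 bn α β : ℝ)
    (hb1 : 0 < b1) (hbn : 0 < bn) (hα : α ≤ 0) (hβ : β ≤ 0)
    (hD : D = H⁻¹ * (-A - b1 • vecMulVec (Pi.single 0 1) d1
        + bn • vecMulVec (Pi.single (Fin.last n) 1) dn))
    (u v u' v' : ℝ → Fin (n + 1) → ℝ)
    (hu : ∀ t, HasDerivAt u (u' t) t) (hv : ∀ t, HasDerivAt v (v' t) t)
    (heq1 : ∀ t, A *ᵥ (u' t - v t) =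
        (b1 * v t 0) • d1 + (α * (dn ⬝ᵥ u t)) • dn)
    (heq2 : ∀ t, v' t = D *ᵥ u t
        - (bn * (dn ⬝ᵥ u t)) • (H⁻¹ *ᵥ Pi.single (Fin.last n) 1)
        + (β * v t 0) • (H⁻¹ *ᵥ Pi.single 0 1))
    (E : ℝ → ℝ)
    (hE : ∀ t, E t = u t ⬝ᵥ (A *ᵥ u t) + v t ⬝ᵥ (H *ᵥ v t)) :
    ∀ t, HasDerivAt E (2 * α * (dn ⬝ᵥ u t) ^ 2 + 2 * β * (v t 0) ^ 2) t ∧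
      2 * α * (dn ⬝ᵥ u t) ^ 2 + 2 * β * (v t 0) ^ 2 ≤ 0 :=
  stmt5_general n H A D hH hA d1 dn b1 bn α β hα hβ hD u v u' v' hu hv heq1 heq2 E hE
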